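/- arXiv:2605.12822 — 5 statements merged into one kernel-verified Lean document; each statement's English description precedes it below -/
import Mathlib

section
/- For every integer m ≥ 1, the polynomial [F_{m+1}]_q · [F_{m+2}]_q (which equals the q-Fibonomial coefficient binom_F(m+2, 2)_q) is symmetric and unimodal. -/
open Polynomial

/-- The q-analog `[n]_q = 1 + q + ⋯ + q^(n-1)` as a polynomial in `ℤ[q]`. -/
noncomputable def qAnalog (n : ℕ) : Polynomial ℤ :=
  ∑ i ∈ Finset.range n, X ^ i

/-- The q-analog `[n]_{q^r} = 1 + q^r + ⋯ + q^(r(n-1))` as a polynomial in `ℤ[q]`. -/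
noncomputable def qAnalogPow (n r : ℕ) : Polynomial ℤ :=
  ∑ i ∈ Finset.range n, X ^ (r * i)

/-- A polynomial of degree `d` is symmetric if `c_k = c_{d-k}` for all `0 ≤ k ≤ d`. -/
def IsSymmPoly (P : Polynomial ℤ) : Prop :=
  ∀ k ≤ P.natDegree, P.coeff k = P.coeff (P.natDegree - k)

/-- A polynomial is unimodal if its coefficient sequence increases up to some
index `M` and decreases afterwards. -/
def IsUnimodalPoly (P : Polynomial ℤ) : Prop :=
  ∃ M : ℕ, (∀ k, k < M → P.coeff k ≤ P.coeff (k + 1)) ∧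
    (∀ k, M ≤ k → P.coeff (k + 1) ≤ P.coeff k)


lemma qAnalog_coeff (a j : ℕ) : (qAnalog a).coeff j = if j < a then 1 else 0 := by
  simp [qAnalog, Polynomial.finset_sum_coeff, Polynomial.coeff_X_pow,
    Finset.sum_ite_eq, Finset.mem_range]

lemma coeff_mul_qAnalog (a b k : ℕ) :
    (qAnalog a * qAnalog b).coeff k
      = ((min (min a (k+1)) (min b (a + b - 1 - k)) : ℕ) : ℤ) := by
  rw [Polynomial.coeff_mul, Finset.Nat.sum_antidiagonal_eq_sum_range_succ_mk]
  simp only [qAnalog_coeff, ite_mul, one_mul, zero_mul, mul_ite, mul_one, mul_zero]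
  simp only [← ite_and]
  rw [Finset.sum_boole]
  congr 1
  have : (Finset.range (k+1)).filter (fun i => k - i < b ∧ i < a)
      = Finset.Ico (k + 1 - b) (min a (k+1)) := by
    ext i
    simp only [Finset.mem_filter, Finset.mem_range, Finset.mem_Ico]
    omega
  rw [this, Nat.card_Ico]
  omega

lemma natDegree_mul_qAnalog (a b : ℕ) (ha : 1 ≤ a) (hb : 1 ≤ b) :
    (qAnalog a * qAnalog b).natDegree = a + b - 2 := by
  apply le_antisymm
  · rw [Polynomial.natDegree_le_iff_coeff_eq_zero]
    intro m hm
    rw [coeff_mul_qAnalog]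
    norm_cast
    omega
  · apply Polynomial.le_natDegree_of_ne_zero
    rw [coeff_mul_qAnalog]
    have : min (min a (a + b - 2 + 1)) (min b (a + b - 1 - (a + b - 2))) = 1 := by omega
    rw [this]
    norm_num

theorem qFibonomial_two_symm_unimodal (m : ℕ) (hm : 1 ≤ m) :
    IsSymmPoly (qAnalog (Nat.fib (m + 1)) * qAnalog (Nat.fib (m + 2))) ∧
    IsUnimodalPoly (qAnalog (Nat.fib (m + 1)) * qAnalog (Nat.fib (m + 2))) := by
  set a := Nat.fib (m + 1) with hadef
  set b := Nat.fib (m + 2) with hbdef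
  have ha : 1 ≤ a := Nat.fib_pos.mpr (by omega)
  have hb : 1 ≤ b := Nat.fib_pos.mpr (by omega)
  have hdeg := natDegree_mul_qAnalog a b ha hb
  constructor
  · intro k hk
    rw [hdeg] at hk ⊢
    rw [coeff_mul_qAnalog, coeff_mul_qAnalog]
    norm_cast
    omega
  · refine ⟨(a + b - 2) / 2, fun k hk => ?_, fun k hk => ?_⟩ <;>
    · rw [coeff_mul_qAnalog, coeff_mul_qAnalog]
      norm_cast
      omega
end

section
/- For every integer m ≥ 1, there exists a polynomial Q ∈ ℤ[q] such that (1 + q) · Q = [F_{m+1}]_q · [F_{m+2}]_q · [F_{m+3}]_q (so Q equals the q-Fibonomial coefficient binom_F(m+3, 3)_q), and Q is symmetric and unimodal. -/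
open Polynomial

/-! Exactly one of `F (m + 1)`, `F (m + 2)`, `F (m + 3)` is even, the one with index divisible
by 3. Writing it as `2 k` and the other two as `a`, `b`, the identity `[2k]_q = (1 + q) [k]_{q²}`
gives `Q = [a]_q [b]_q [k]_{q²}`, whose coefficient sequence is the sum of the shifts by
`0, 2, …, 2(k - 1)` of the symmetric trapezoid of coefficients of `[a]_q [b]_q`. A trapezoid
steps up by one on `[0, min a b)` and down by one on `[max a b, a + b)`, so the increment of the
sum at `t` is a difference of counts of even numbers `2l < 2k` in two windows of width `min a b`;
below the middle degree the rising window wins as soon as `2k ≤ max a b + 1` or `2k = a + b`,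
and consecutive Fibonacci numbers satisfy one of these. -/

theorem coeff_qAnalog (n j : ℕ) : (qAnalog n).coeff j = if j < n then 1 else 0 := by
  simp [qAnalog, coeff_X_pow, Finset.sum_ite_eq]

theorem qAnalog_two_mul (k : ℕ) : qAnalog (2 * k) = (1 + X) * qAnalogPow k 2 := by
  induction k with
  | zero => simp [qAnalog, qAnalogPow]
  | succ k ih =>
    rw [qAnalogPow, Finset.sum_range_succ, ← qAnalogPow, mul_add (1 + X), ← ih]
    simp only [qAnalog, show 2 * (k + 1) = 2 * k + 1 + 1 by ring, Finset.sum_range_succ]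
    ring

theorem IsSymmPoly.isUnimodalPoly {P : ℤ[X]} (hsymm : IsSymmPoly P)
    (hlead : 0 ≤ P.leadingCoeff)
    (hmono : ∀ k, 2 * (k + 1) ≤ P.natDegree → P.coeff k ≤ P.coeff (k + 1)) :
    IsUnimodalPoly P := by
  refine ⟨P.natDegree / 2, fun k hk => hmono k (by omega), fun k hk => ?_⟩
  rcases lt_or_ge P.natDegree (k + 1) with hkd | hkd
  · rw [coeff_eq_zero_of_natDegree_lt hkd]
    rcases eq_or_lt_of_le (Nat.le_of_lt_succ hkd) with hk' | hk'
    · rwa [← hk']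
    · rw [coeff_eq_zero_of_natDegree_lt hk']
  · rcases eq_or_lt_of_le (show P.natDegree ≤ 2 * k + 1 by omega) with hodd | heven
    · rw [hsymm (k + 1) hkd, show P.natDegree - (k + 1) = k by omega]
    · rw [hsymm k (by omega), hsymm (k + 1) hkd,
        show P.natDegree - k = P.natDegree - (k + 1) + 1 by omega]
      exact hmono (P.natDegree - (k + 1)) (by omega)

/-- The coefficient of `q ^ s` in `[a]_q [b]_q`, for every `s : ℤ`. -/
def trapezoid (a b : ℕ) (s : ℤ) : ℤ :=
  max 0 (min (min (s + 1) ((a : ℤ) + b - 1 - s)) (min (a : ℤ) b))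

theorem coeff_qAnalog_mul_qAnalog (a b n : ℕ) :
    (qAnalog a * qAnalog b).coeff n = trapezoid a b n := by
  induction a with
  | zero => simp [qAnalog, trapezoid]
  | succ a ih =>
    rw [qAnalog, Finset.sum_range_succ, ← qAnalog, add_mul, coeff_add, ih, coeff_X_pow_mul',
      coeff_qAnalog]
    unfold trapezoid
    split_ifs <;> omega

theorem trapezoid_nonneg (a b : ℕ) (s : ℤ) : 0 ≤ trapezoid a b s := le_max_left _ _

theorem trapezoid_reflect (a b : ℕ) (s : ℤ) :
    trapezoid a b ((a : ℤ) + b - 2 - s) = trapezoid a b s := by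
  unfold trapezoid; omega

theorem trapezoid_eq_zero_of_lt (a b : ℕ) {s : ℤ} (h : (a : ℤ) + b - 2 < s) :
    trapezoid a b s = 0 := by
  unfold trapezoid; omega

theorem trapezoid_sub_trapezoid_sub_one (a b : ℕ) (s : ℤ) :
    trapezoid a b s - trapezoid a b (s - 1) =
      (if 0 ≤ s ∧ s < min (a : ℤ) b then 1 else 0) -
        (if max (a : ℤ) b ≤ s ∧ s < (a : ℤ) + b then 1 else 0) := by
  unfold trapezoid; split_ifs <;> omega

theorem natCast_card_filter_range_two_mul_mem_Ioc (n : ℕ) (lo hi : ℤ) :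
    ((((Finset.range n).filter fun l : ℕ => lo < 2 * (l : ℤ) ∧ 2 * (l : ℤ) ≤ hi).card : ℕ) : ℤ) =
      max 0 (min (hi / 2) ((n : ℤ) - 1) - max (lo / 2 + 1) 0 + 1) := by
  induction n with
  | zero => simp
  | succ n ih =>
    rw [Finset.range_add_one, Finset.filter_insert]
    split_ifs
    · rw [Finset.card_insert_of_notMem (by simp)]
      push_cast at ih ⊢
      omega
    · push_cast at ih ⊢
      omega

/-- The coefficient of `q ^ t` in `[a]_q [b]_q [k]_{q²}`, for every `t : ℤ`. -/
def trapezoidSum (a b k : ℕ) (t : ℤ) : ℤ :=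
  ∑ l ∈ Finset.range k, trapezoid a b (t - 2 * l)

theorem coeff_qAnalog_mul_qAnalog_mul_qAnalogPow_two (a b k n : ℕ) :
    (qAnalog a * qAnalog b * qAnalogPow k 2).coeff n = trapezoidSum a b k n := by
  induction k with
  | zero => simp [qAnalogPow, trapezoidSum]
  | succ k ih =>
    rw [qAnalogPow, Finset.sum_range_succ, ← qAnalogPow, mul_add, coeff_add, ih,
      coeff_mul_X_pow', trapezoidSum, trapezoidSum, Finset.sum_range_succ]
    split_ifs with h
    · rw [coeff_qAnalog_mul_qAnalog]
      congr 2
      omega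
    · unfold trapezoid
      omega

theorem trapezoidSum_reflect (a b k : ℕ) (t : ℤ) :
    trapezoidSum a b k ((a : ℤ) + b + 2 * k - 4 - t) = trapezoidSum a b k t := by
  rw [trapezoidSum, ← Finset.sum_range_reflect]
  refine Finset.sum_congr rfl fun l hl => ?_
  have hl : l < k := Finset.mem_range.mp hl
  rw [← trapezoid_reflect a b (t - 2 * l)]
  congr 1
  omega

theorem trapezoidSum_eq_zero_of_lt (a b k : ℕ) {t : ℤ} (h : (a : ℤ) + b + 2 * k - 4 < t) :
    trapezoidSum a b k t = 0 :=
  Finset.sum_eq_zero fun l hl =>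
    trapezoid_eq_zero_of_lt a b (by have := Finset.mem_range.mp hl; omega)

theorem trapezoidSum_zero {a b k : ℕ} (ha : 1 ≤ a) (hb : 1 ≤ b) (hk : 1 ≤ k) :
    trapezoidSum a b k 0 = 1 := by
  rw [trapezoidSum, Finset.sum_eq_single_of_mem 0 (Finset.mem_range.mpr hk)]
  · unfold trapezoid; omega
  · intro l _ hl
    unfold trapezoid
    omega

theorem trapezoidSum_sub_one_le {a b k : ℕ} (hcond : 2 * k ≤ max a b + 1 ∨ a + b = 2 * k)
    {t : ℤ} (ht : 2 * t ≤ (a : ℤ) + b + 2 * k - 4) :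
    trapezoidSum a b k (t - 1) ≤ trapezoidSum a b k t := by
  have hdiff : trapezoidSum a b k t - trapezoidSum a b k (t - 1) =
      ((((Finset.range k).filter fun l : ℕ =>
          t - min (a : ℤ) b < 2 * (l : ℤ) ∧ 2 * (l : ℤ) ≤ t).card : ℕ) : ℤ) -
        ((((Finset.range k).filter fun l : ℕ =>
          t - a - b < 2 * (l : ℤ) ∧ 2 * (l : ℤ) ≤ t - max (a : ℤ) b).card : ℕ) : ℤ) := by
    rw [trapezoidSum, trapezoidSum, ← Finset.sum_sub_distrib, Finset.natCast_card_filter,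
      Finset.natCast_card_filter, ← Finset.sum_sub_distrib]
    refine Finset.sum_congr rfl fun l _ => ?_
    rw [show t - 1 - 2 * (l : ℤ) = t - 2 * l - 1 by ring, trapezoid_sub_trapezoid_sub_one]
    split_ifs <;> omega
  rw [natCast_card_filter_range_two_mul_mem_Ioc, natCast_card_filter_range_two_mul_mem_Ioc]
    at hdiff
  omega

section

variable {a b k : ℕ}

theorem natDegree_qAnalog_mul_qAnalog_mul_qAnalogPow_two (ha : 1 ≤ a) (hb : 1 ≤ b)
    (hk : 1 ≤ k) : (qAnalog a * qAnalog b * qAnalogPow k 2).natDegree = a + b + 2 * k - 4 := by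
  refine natDegree_eq_of_le_of_coeff_ne_zero ?_ ?_
  · refine natDegree_le_iff_coeff_eq_zero.mpr fun n hn => ?_
    rw [coeff_qAnalog_mul_qAnalog_mul_qAnalogPow_two]
    exact trapezoidSum_eq_zero_of_lt a b k (by omega)
  · rw [coeff_qAnalog_mul_qAnalog_mul_qAnalogPow_two, ← trapezoidSum_reflect,
      show (a : ℤ) + b + 2 * k - 4 - ((a + b + 2 * k - 4 : ℕ) : ℤ) = 0 by omega,
      trapezoidSum_zero ha hb hk]
    exact one_ne_zero

theorem isSymmPoly_qAnalog_mul_qAnalog_mul_qAnalogPow_two (ha : 1 ≤ a) (hb : 1 ≤ b)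
    (hk : 1 ≤ k) : IsSymmPoly (qAnalog a * qAnalog b * qAnalogPow k 2) := by
  intro n hn
  rw [natDegree_qAnalog_mul_qAnalog_mul_qAnalogPow_two ha hb hk] at hn ⊢
  rw [coeff_qAnalog_mul_qAnalog_mul_qAnalogPow_two, coeff_qAnalog_mul_qAnalog_mul_qAnalogPow_two,
    ← trapezoidSum_reflect]
  congr 1
  omega

theorem isUnimodalPoly_qAnalog_mul_qAnalog_mul_qAnalogPow_two (ha : 1 ≤ a) (hb : 1 ≤ b)
    (hk : 1 ≤ k) (hcond : 2 * k ≤ max a b + 1 ∨ a + b = 2 * k) :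
    IsUnimodalPoly (qAnalog a * qAnalog b * qAnalogPow k 2) := by
  have hdeg := natDegree_qAnalog_mul_qAnalog_mul_qAnalogPow_two ha hb hk
  refine (isSymmPoly_qAnalog_mul_qAnalog_mul_qAnalogPow_two ha hb hk).isUnimodalPoly ?_ ?_
  · rw [leadingCoeff, coeff_qAnalog_mul_qAnalog_mul_qAnalogPow_two]
    exact Finset.sum_nonneg fun l _ => trapezoid_nonneg a b _
  · intro n hn
    rw [coeff_qAnalog_mul_qAnalog_mul_qAnalogPow_two, coeff_qAnalog_mul_qAnalog_mul_qAnalogPow_two,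
      Nat.cast_succ]
    simpa using trapezoidSum_sub_one_le hcond (t := n + 1) (by omega)

theorem exists_one_add_X_mul_eq_qAnalog_mul_qAnalog_mul_qAnalog_two_mul (ha : 1 ≤ a)
    (hb : 1 ≤ b) (hk : 1 ≤ k) (hcond : 2 * k ≤ max a b + 1 ∨ a + b = 2 * k) :
    ∃ Q : ℤ[X], (1 + X) * Q = qAnalog a * qAnalog b * qAnalog (2 * k) ∧
      IsSymmPoly Q ∧ IsUnimodalPoly Q :=
  ⟨qAnalog a * qAnalog b * qAnalogPow k 2, by rw [qAnalog_two_mul]; ring,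
    isSymmPoly_qAnalog_mul_qAnalog_mul_qAnalogPow_two ha hb hk,
    isUnimodalPoly_qAnalog_mul_qAnalog_mul_qAnalogPow_two ha hb hk hcond⟩

end

theorem qFibonomial_three_symm_unimodal_general (m : ℕ) :
    ∃ Q : Polynomial ℤ,
      (1 + X) * Q
        = qAnalog (Nat.fib (m + 1)) * qAnalog (Nat.fib (m + 2)) *
            qAnalog (Nat.fib (m + 3)) ∧
      IsSymmPoly Q ∧ IsUnimodalPoly Q := by
  have hpos : 0 < Nat.fib (m + 1) := Nat.fib_pos.mpr (Nat.succ_pos m)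
  have hle₁ : Nat.fib (m + 1) ≤ Nat.fib (m + 2) := Nat.fib_le_fib_succ
  have hle₂ : Nat.fib (m + 2) ≤ Nat.fib (m + 3) := Nat.fib_le_fib_succ
  have hadd : Nat.fib (m + 3) = Nat.fib (m + 1) + Nat.fib (m + 2) := Nat.fib_add_two
  rcases (by omega : 3 ∣ m + 1 ∨ 3 ∣ m + 2 ∨ 3 ∣ m + 3) with h | h | h
  · obtain ⟨k, hk⟩ : 2 ∣ Nat.fib _ := Nat.isDvdSequence_fib 3 _ h
    obtain ⟨Q, hQ, hQs⟩ := exists_one_add_X_mul_eq_qAnalog_mul_qAnalog_mul_qAnalog_two_mul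
      (a := Nat.fib (m + 2)) (b := Nat.fib (m + 3)) (k := k) (by omega) (by omega) (by omega)
      (by omega)
    exact ⟨Q, by rw [hQ, hk]; ring, hQs⟩
  · obtain ⟨k, hk⟩ : 2 ∣ Nat.fib _ := Nat.isDvdSequence_fib 3 _ h
    obtain ⟨Q, hQ, hQs⟩ := exists_one_add_X_mul_eq_qAnalog_mul_qAnalog_mul_qAnalog_two_mul
      (a := Nat.fib (m + 1)) (b := Nat.fib (m + 3)) (k := k) (by omega) (by omega) (by omega)
      (by omega)
    exact ⟨Q, by rw [hQ, hk]; ring, hQs⟩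
  · obtain ⟨k, hk⟩ : 2 ∣ Nat.fib _ := Nat.isDvdSequence_fib 3 _ h
    obtain ⟨Q, hQ, hQs⟩ := exists_one_add_X_mul_eq_qAnalog_mul_qAnalog_mul_qAnalog_two_mul
      (a := Nat.fib (m + 1)) (b := Nat.fib (m + 2)) (k := k) (by omega) (by omega) (by omega)
      (by omega)
    exact ⟨Q, by rw [hQ, hk], hQs⟩

theorem qFibonomial_three_symm_unimodal (m : ℕ) (hm : 1 ≤ m) :
    ∃ Q : Polynomial ℤ,
      (1 + X) * Q
        = qAnalog (Nat.fib (m + 1)) * qAnalog (Nat.fib (m + 2)) *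
            qAnalog (Nat.fib (m + 3)) ∧
      IsSymmPoly Q ∧ IsUnimodalPoly Q :=
  qFibonomial_three_symm_unimodal_general m
end

section
/- Let a, b, r be three positive integers such that r divides a. Then the polynomial [a]_q · [b]_{q^r} is symmetric and unimodal. -/
open Polynomial

lemma count_lemma (N k n : ℕ) :
    (∑ x ∈ Finset.range N, if k = x + n then (1:ℤ) else 0)
      = if n ≤ k ∧ k < n + N then 1 else 0 := by
  split_ifs with h
  · rw [Finset.sum_eq_single (k - n)]
    · rw [if_pos (by omega)]
    · intro x hx hne
      rw [if_neg (by omega)]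
    · intro hnm
      exact absurd (Finset.mem_range.mpr (by omega)) hnm
  · apply Finset.sum_eq_zero
    intro x hx
    rw [Finset.mem_range] at hx
    rw [if_neg (by omega)]

lemma cond_iff (m r k j : ℕ) (hr : 0 < r) :
    (r*j ≤ k ∧ k < r*j + r*m) ↔ (k/r + 1 - m ≤ j ∧ j < k/r + 1) := by
  have h1 : j ≤ k / r ↔ j * r ≤ k := Nat.le_div_iff_mul_le hr
  have h2 : k / r < j + m ↔ k < (j + m) * r := Nat.div_lt_iff_lt_mul hr
  rw [mul_comm j r] at h1
  rw [show (j+m)*r = r*j + r*m by ring] at h2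
  revert h1 h2
  generalize k / r = F
  generalize r * j = A
  generalize r * m = B
  intro h1 h2
  omega

/-- Key coefficient formula for the product `[r*m]_q * [b]_{q^r}`. -/
lemma coeff_eq (m b r : ℕ) (hr : 0 < r) (k : ℕ) :
    (qAnalog (r*m) * qAnalogPow b r).coeff k
      = ((min (k/r + 1) b - (k/r + 1 - m) : ℕ) : ℤ) := by
  unfold qAnalog qAnalogPow
  rw [Finset.sum_mul_sum]
  simp_rw [← pow_add, Polynomial.finset_sum_coeff, Polynomial.coeff_X_pow]
  rw [Finset.sum_comm]
  have hstep : ∀ j : ℕ, (∑ x ∈ Finset.range (r*m), if k = x + r*j then (1:ℤ) else 0)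
      = if k/r + 1 - m ≤ j ∧ j < k/r + 1 then 1 else 0 := by
    intro j
    rw [count_lemma]
    exact if_congr (cond_iff m r k j hr) rfl rfl
  rw [Finset.sum_congr rfl (fun j _ => hstep j), Finset.sum_boole]
  have hset : (Finset.range b).filter (fun j => k/r + 1 - m ≤ j ∧ j < k/r + 1)
      = Finset.Ico (k/r + 1 - m) (min (k/r + 1) b) := by
    ext j
    simp only [Finset.mem_filter, Finset.mem_range, Finset.mem_Ico]
    omega
  rw [hset, Nat.card_Ico]

lemma div_rev (r n k : ℕ) (hr : 0 < r) (hn : 0 < n) (hk : k ≤ r*n - 1) :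
    (r*n - 1 - k)/r = n - 1 - k/r := by
  obtain ⟨q, hq'⟩ : ∃ q, k / r = q := ⟨_, rfl⟩
  obtain ⟨s, hs'⟩ : ∃ s, k % r = s := ⟨_, rfl⟩
  have hqs : r * q + s = k := by rw [← hq', ← hs']; exact Nat.div_add_mod k r
  have hs : s < r := by rw [← hs']; exact Nat.mod_lt _ hr
  have hrnpos : 0 < r * n := Nat.mul_pos hr hn
  have hq : q < n := by
    have h1 : r * q ≤ k := by omega
    have h2 : r * q < r * n := lt_of_le_of_lt h1 (lt_of_le_of_lt hk (by omega))
    exact lt_of_mul_lt_mul_left h2 (Nat.zero_le r)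
  have hrn : r * q + r ≤ r * n := by
    have := Nat.mul_le_mul_left r (show q + 1 ≤ n from hq)
    rw [Nat.mul_add, mul_one] at this
    exact this
  have e1 : r * (n - 1 - q) = r * n - r - r * q := by
    rw [Nat.mul_sub, Nat.mul_sub, mul_one]
  have key : r*n - 1 - k = r * (n - 1 - q) + (r - 1 - s) := by
    rw [e1]; omega
  rw [key, Nat.mul_add_div hr, Nat.div_eq_of_lt (show r - 1 - s < r by omega), hq',
    Nat.add_zero]

lemma topdiv (m b r : ℕ) (hr : 0 < r) (hm : 0 < m) (hb : 0 < b) :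
    (r*(m+b-1) - 1)/r = m + b - 2 := by
  have h := div_rev r (m+b-1) 0 hr (by omega) (Nat.zero_le _)
  simp only [Nat.sub_zero, Nat.zero_div] at h
  omega

lemma natdeg (m b r : ℕ) (hr : 0 < r) (hm : 0 < m) (hb : 0 < b) :
    (qAnalog (r*m) * qAnalogPow b r).natDegree = r*(m+b-1) - 1 := by
  apply le_antisymm
  · rw [Polynomial.natDegree_le_iff_coeff_eq_zero]
    intro k hk
    rw [coeff_eq m b r hr k]
    have hge : m + b - 1 ≤ k / r := by
      rw [Nat.le_div_iff_mul_le hr, mul_comm]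
      omega
    have hz : min (k/r + 1) b - (k/r + 1 - m) = 0 := by omega
    rw [hz]
    rfl
  · apply Polynomial.le_natDegree_of_ne_zero
    rw [coeff_eq m b r hr, topdiv m b r hr hm hb]
    have h1 : min (m+b-2+1) b - (m+b-2+1 - m) = 1 := by omega
    rw [h1]
    simp

theorem qAnalog_mul_qAnalogPow_symm_unimodal (a b r : ℕ)
    (ha : 1 ≤ a) (hb : 1 ≤ b) (hr : 1 ≤ r) (hdvd : r ∣ a) :
    IsSymmPoly (qAnalog a * qAnalogPow b r) ∧
    IsUnimodalPoly (qAnalog a * qAnalogPow b r) := by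
  obtain ⟨m, rfl⟩ := hdvd
  have hm : 0 < m := by
    rcases Nat.eq_zero_or_pos m with h | h
    · subst h; simp at ha
    · exact h
  constructor
  · -- symmetry
    intro k hk
    rw [natdeg m b r hr hm hb] at hk ⊢
    rw [coeff_eq m b r hr, coeff_eq m b r hr]
    rw [div_rev r (m+b-1) k hr (by omega) hk]
    have hkr : k/r ≤ m+b-2 := by
      have h1 := Nat.div_le_div_right (c := r) hk
      rw [topdiv m b r hr hm hb] at h1
      exact h1
    congr 1
    omega
  · -- unimodality
    refine ⟨r * ((b+m-1)/2), fun k hk => ?_, fun k hk => ?_⟩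
    · rw [coeff_eq m b r hr, coeff_eq m b r hr]
      have h1 : k/r ≤ (k+1)/r := Nat.div_le_div_right (Nat.le_succ k)
      have h2 : (k+1)/r ≤ k/r + 1 := by
        have h := Nat.div_le_div_right (c := r) (show k+1 ≤ k+r by omega)
        rwa [Nat.add_div_right k hr] at h
      have h3 : k/r < (b+m-1)/2 := by
        rw [Nat.div_lt_iff_lt_mul hr, mul_comm]
        exact hk
      rw [Nat.cast_le]
      omega
    · rw [coeff_eq m b r hr, coeff_eq m b r hr]
      have h1 : k/r ≤ (k+1)/r := Nat.div_le_div_right (Nat.le_succ k)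
      have h2 : (k+1)/r ≤ k/r + 1 := by
        have h := Nat.div_le_div_right (c := r) (show k+1 ≤ k+r by omega)
        rwa [Nat.add_div_right k hr] at h
      have h3 : (b+m-1)/2 ≤ k/r := by
        rw [Nat.le_div_iff_mul_le hr, mul_comm]
        exact hk
      rw [Nat.cast_le]
      omega
end

section
/- Let a_1, …, a_k, b, r be positive integers. If r divides a_i for some 1 ≤ i ≤ k, then the polynomial [a_1]_q · [a_2]_q ⋯ [a_k]_q · [b]_{q^r} is symmetric and unimodal. -/
open Polynomial

/-!
Write `a i₀ = r * m`. Since `[r m]_q = [r]_q · [m]_{q^r}`, the polynomial equals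
`[r]_q · F(q^r) · ∏_{i ≠ i₀} [a i]_q` with `F = [m]_q · [b]_q`. Extend coefficient sequences by zero
to `ℤ` and call one symmetric unimodal about `d` if it is invariant under `z ↦ d - z` and weakly
increasing up to the middle. Multiplying by `[n]_q` turns `c` into the window sum
`z ↦ ∑_{i<n} c (z - i)`, and passing from `F` to `[r]_q · F(q^r)` turns `c` into `z ↦ c ⌊z / r⌋`;
both operations preserve the property. Starting from `1`, the whole product is therefore symmetric
unimodal about some `d`, and since its constant coefficient is `1`, `d` is its degree.
-/

open Finset

structure IsSymmUnimodal {α : Type*} [Zero α] [LE α] (d : ℤ) (c : ℤ → α) : Prop where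
  eq_zero_of_neg : ∀ z < 0, c z = 0
  symm : ∀ z, c (d - z) = c z
  mono : ∀ i j, i ≤ j → i + j ≤ d → c i ≤ c j

namespace IsSymmUnimodal

section Preorder

variable {α : Type*} [Zero α] [Preorder α] {d : ℤ} {c : ℤ → α}

theorem of_le_add_one (hneg : ∀ z < 0, c z = 0) (hsymm : ∀ z, c (d - z) = c z)
    (hstep : ∀ z, 2 * z < d → c z ≤ c (z + 1)) : IsSymmUnimodal d c := by
  have hhalf : MonotoneOn c (Set.Iic (d / 2)) :=
    monotoneOn_of_le_succ Set.ordConnected_Iic fun z _ _ hz => by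
      rw [Order.succ_eq_add_one] at hz ⊢
      exact hstep z (by rw [Set.mem_Iic] at hz; omega)
  refine ⟨hneg, hsymm, fun i j hij hsum => ?_⟩
  by_cases hj : 2 * j ≤ d
  · exact hhalf (Set.mem_Iic.2 (by omega)) (Set.mem_Iic.2 (by omega)) hij
  · rw [← hsymm j]
    exact hhalf (Set.mem_Iic.2 (by omega)) (Set.mem_Iic.2 (by omega)) (by omega)

theorem comp_ediv (h : IsSymmUnimodal d c) {r : ℤ} (hr : 0 < r) :
    IsSymmUnimodal (r * (d + 1) - 1) (fun z => c (z / r)) := by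
  refine of_le_add_one (fun z hz => h.eq_zero_of_neg _ (Int.ediv_neg_of_neg_of_pos hz hr))
    (fun z => ?_) (fun z hz => ?_)
  · have hdiv : (r * (d + 1) - 1 - z) / r = d - z / r :=
      ((Int.ediv_emod_unique (r := r - 1 - z % r) hr).2 ⟨by rw [Int.emod_def]; ring,
        by have := Int.emod_lt_of_pos z hr; omega,
        by have := Int.emod_nonneg z hr.ne'; omega⟩).1
    simp only [hdiv, h.symm]
  · have h1 := Int.ediv_mul_le z hr.ne'
    have h2 := Int.ediv_mul_le (z + 1) hr.ne'
    refine h.mono _ _ (Int.ediv_le_ediv hr (by omega)) ?_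
    have : (z / r + (z + 1) / r) * r < (d + 1) * r := by linarith
    have := lt_of_mul_lt_mul_right this hr.le
    omega

end Preorder

theorem sum_range_sub {α : Type*} [AddCommMonoid α] [PartialOrder α] [IsOrderedAddMonoid α]
    {d : ℤ} {c : ℤ → α} (h : IsSymmUnimodal d c) (n : ℕ) :
    IsSymmUnimodal (d + n - 1) (fun z => ∑ i ∈ range n, c (z - i)) := by
  refine of_le_add_one (fun z hz => sum_eq_zero fun i _ => h.eq_zero_of_neg _ (by omega))
    (fun z => ?_) (fun z hz => ?_)
  · rw [← sum_range_reflect]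
    refine sum_congr rfl fun i hi => ?_
    rw [← h.symm]
    congr 1
    have := mem_range.1 hi
    omega
  · cases n with
    | zero => simp
    | succ m =>
      rw [sum_range_succ, sum_range_succ']
      simp only [Nat.cast_add, Nat.cast_one, Nat.cast_zero, sub_zero, add_sub_add_right_eq_sub]
      exact add_le_add le_rfl (h.mono (z - m) (z + 1) (by omega) (by push_cast at hz; omega))

end IsSymmUnimodal

theorem qAnalogPow_eq_expand (n r : ℕ) : qAnalogPow n r = expand ℤ r (qAnalog n) := by
  simp [qAnalogPow, qAnalog, pow_mul]

theorem qAnalog_mul_X_sub_one (n : ℕ) : qAnalog n * (X - 1) = X ^ n - 1 :=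
  geom_sum_mul X n

theorem qAnalog_mul (r m : ℕ) : qAnalog (r * m) = qAnalog r * expand ℤ r (qAnalog m) := by
  refine mul_right_cancel₀ (X_sub_C_ne_zero (1 : ℤ)) ?_
  rw [C_1]
  calc qAnalog (r * m) * (X - 1) = expand ℤ r (qAnalog m * (X - 1)) := by
        rw [qAnalog_mul_X_sub_one, qAnalog_mul_X_sub_one, map_sub, map_pow, expand_X, map_one,
          pow_mul]
    _ = qAnalog r * expand ℤ r (qAnalog m) * (X - 1) := by
      rw [map_mul, map_sub, expand_X, map_one, ← qAnalog_mul_X_sub_one r]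
      ring

theorem coeff_zero_qAnalog {n : ℕ} (hn : 0 < n) : (qAnalog n).coeff 0 = 1 := by
  simp [qAnalog, finsetSum_coeff, coeff_X_pow, hn]

theorem coeff_zero_qAnalogPow {n r : ℕ} (hn : 0 < n) (hr : 0 < r) :
    (qAnalogPow n r).coeff 0 = 1 := by
  rw [qAnalogPow_eq_expand, coeff_expand hr, if_pos (dvd_zero r), Nat.zero_div,
    coeff_zero_qAnalog hn]

def coeffInt {R : Type*} [Semiring R] (P : R[X]) (z : ℤ) : R :=
  if 0 ≤ z then P.coeff z.toNat else 0

section coeffInt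

variable {R : Type*} [Semiring R]

@[simp]
theorem coeffInt_natCast (P : R[X]) (n : ℕ) : coeffInt P n = P.coeff n := by
  simp [coeffInt]

theorem coeffInt_of_neg (P : R[X]) {z : ℤ} (hz : z < 0) : coeffInt P z = 0 := by
  simp [coeffInt, hz.not_ge]

theorem coeffInt_mul_X_pow (P : R[X]) (n : ℕ) (z : ℤ) :
    coeffInt (P * X ^ n) z = coeffInt P (z - n) := by
  rcases lt_or_ge z 0 with hz | hz
  · rw [coeffInt_of_neg _ hz, coeffInt_of_neg _ (by omega)]
  · lift z to ℕ using hz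
    rw [coeffInt_natCast, coeff_mul_X_pow']
    split_ifs with h
    · rw [← Nat.cast_sub h, coeffInt_natCast]
    · rw [coeffInt_of_neg _ (by omega)]

theorem coeffInt_sum {ι : Type*} (s : Finset ι) (P : ι → R[X]) (z : ℤ) :
    coeffInt (∑ i ∈ s, P i) z = ∑ i ∈ s, coeffInt (P i) z := by
  unfold coeffInt
  split_ifs <;> simp [finsetSum_coeff]

end coeffInt

theorem coeffInt_expand {R : Type*} [CommSemiring R] (P : R[X]) {r : ℕ} (hr : 0 < r) (z : ℤ) :
    coeffInt (expand R r P) z = if (r : ℤ) ∣ z then coeffInt P (z / r) else 0 := by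
  rcases lt_or_ge z 0 with hz | hz
  · rw [coeffInt_of_neg _ hz, coeffInt_of_neg _ (Int.ediv_neg_of_neg_of_pos hz (by omega)),
      ite_self]
  · lift z to ℕ using hz
    simp only [coeffInt_natCast, coeff_expand hr, Int.natCast_dvd_natCast, ← Int.natCast_ediv]

theorem coeffInt_mul_qAnalog (P : ℤ[X]) (n : ℕ) (z : ℤ) :
    coeffInt (P * qAnalog n) z = ∑ i ∈ range n, coeffInt P (z - i) := by
  simp only [qAnalog, mul_sum, coeffInt_sum, coeffInt_mul_X_pow]

theorem coeffInt_expand_mul_qAnalog (P : ℤ[X]) {r : ℕ} (hr : 0 < r) (z : ℤ) :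
    coeffInt (expand ℤ r P * qAnalog r) z = coeffInt P (z / r) := by
  have hr' : (0 : ℤ) < r := by exact_mod_cast hr
  have hmem : (z % r).toNat ∈ range r := by
    have := Int.emod_lt_of_pos z hr'
    rw [mem_range]; omega
  -- among the `z - i` with `0 ≤ i < r`, only `z - z % r` is a multiple of `r`
  rw [coeffInt_mul_qAnalog, sum_eq_single_of_mem _ hmem]
  · rw [coeffInt_expand _ hr, Int.toNat_of_nonneg (Int.emod_nonneg z hr'.ne'),
      if_pos Int.dvd_self_sub_emod, Int.emod_def, sub_sub_cancel,
      Int.mul_ediv_cancel_left _ hr'.ne']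
  · intro i hi hne
    have hndvd : ¬ (r : ℤ) ∣ z - i := by
      rw [Int.dvd_iff_emod_eq_zero, ← Int.emod_eq_emod_iff_emod_sub_eq_zero,
        Int.emod_eq_of_lt (a := (i : ℤ)) (by omega) (by simpa using hi)]
      omega
    rw [coeffInt_expand _ hr, if_neg hndvd]

theorem coeffInt_one (z : ℤ) : coeffInt (1 : ℤ[X]) z = if z = 0 then 1 else 0 := by
  unfold coeffInt
  split_ifs <;> simp [coeff_one] <;> omega

def HasSymmUnimodalCoeffs (P : ℤ[X]) : Prop :=
  ∃ d, IsSymmUnimodal d (coeffInt P)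

namespace HasSymmUnimodalCoeffs

theorem one : HasSymmUnimodalCoeffs 1 := by
  refine ⟨0, .of_le_add_one (fun z hz => coeffInt_of_neg _ hz) (fun z => ?_) (fun z hz => ?_)⟩
  · simp only [coeffInt_one, zero_sub, neg_eq_zero]
  · simp only [coeffInt_one]
    split_ifs <;> omega

theorem mul_qAnalog {P : ℤ[X]} (h : HasSymmUnimodalCoeffs P) (n : ℕ) :
    HasSymmUnimodalCoeffs (P * qAnalog n) := by
  obtain ⟨d, hd⟩ := h
  rw [HasSymmUnimodalCoeffs, funext (coeffInt_mul_qAnalog P n)]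
  exact ⟨_, hd.sum_range_sub n⟩

theorem mul_prod_qAnalog {ι : Type*} {P : ℤ[X]} (h : HasSymmUnimodalCoeffs P) (s : Finset ι)
    (a : ι → ℕ) : HasSymmUnimodalCoeffs (P * ∏ i ∈ s, qAnalog (a i)) := by
  refine prod_induction _ (fun Q => ∀ P, HasSymmUnimodalCoeffs P → HasSymmUnimodalCoeffs (P * Q))
    (fun Q₁ Q₂ h₁ h₂ P hP => ?_) (fun P hP => by rwa [mul_one]) (fun i _ P hP => hP.mul_qAnalog _)
    P h
  rw [← mul_assoc]
  exact h₂ _ (h₁ P hP)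

theorem expand_mul_qAnalog {P : ℤ[X]} (h : HasSymmUnimodalCoeffs P) {r : ℕ} (hr : 0 < r) :
    HasSymmUnimodalCoeffs (expand ℤ r P * qAnalog r) := by
  obtain ⟨d, hd⟩ := h
  rw [HasSymmUnimodalCoeffs, funext (coeffInt_expand_mul_qAnalog P hr)]
  exact ⟨_, hd.comp_ediv (by exact_mod_cast hr)⟩

end HasSymmUnimodalCoeffs

theorem IsSymmUnimodal.natDegree_eq {P : ℤ[X]} {d : ℤ} (h : IsSymmUnimodal d (coeffInt P))
    (h0 : P.coeff 0 ≠ 0) : (P.natDegree : ℤ) = d := by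
  have hd : coeffInt P d = P.coeff 0 := by simpa using (h.symm 0).trans (coeffInt_natCast P 0)
  have hd0 : 0 ≤ d := by
    by_contra! hneg
    exact h0 (hd ▸ coeffInt_of_neg P hneg)
  lift d to ℕ using hd0
  refine congrArg _ (le_antisymm (natDegree_le_iff_coeff_eq_zero.2 fun N hN => ?_)
    (le_natDegree_of_ne_zero (by rwa [← coeffInt_natCast, hd])))
  rw [← coeffInt_natCast, ← h.symm, coeffInt_of_neg _ (by omega)]

theorem HasSymmUnimodalCoeffs.isSymmPoly_and_isUnimodalPoly {P : ℤ[X]}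
    (h : HasSymmUnimodalCoeffs P) (h0 : P.coeff 0 ≠ 0) : IsSymmPoly P ∧ IsUnimodalPoly P := by
  obtain ⟨d, hd⟩ := h
  obtain rfl := hd.natDegree_eq h0
  set N := P.natDegree
  simp only [IsSymmPoly, IsUnimodalPoly, ← coeffInt_natCast]
  refine ⟨fun k hk => ?_, (N + 1) / 2, fun k hk => ?_, fun k hk => ?_⟩
  · rw [Nat.cast_sub hk, hd.symm]
  · push_cast
    exact hd.mono _ _ (by omega) (by omega)
  · push_cast
    rw [← hd.symm (k + 1)]
    exact hd.mono _ _ (by omega) (by omega)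

theorem prod_qAnalogs_mul_qAnalogPow_symm_unimodal_general (k : ℕ)
    (a : Fin k → ℕ) (b r : ℕ) (ha : ∀ i, 1 ≤ a i) (hb : 1 ≤ b)
    (hdvd : ∃ i, r ∣ a i) :
    IsSymmPoly ((∏ i, qAnalog (a i)) * qAnalogPow b r) ∧
    IsUnimodalPoly ((∏ i, qAnalog (a i)) * qAnalogPow b r) := by
  obtain ⟨i₀, m, hm⟩ := hdvd
  have hr : 0 < r := Nat.pos_of_dvd_of_pos ⟨m, hm⟩ (ha i₀)
  have hfactor : (∏ i, qAnalog (a i)) * qAnalogPow b r =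
      expand ℤ r (1 * qAnalog m * qAnalog b) * qAnalog r * ∏ i ∈ univ.erase i₀, qAnalog (a i) := by
    rw [← mul_prod_erase univ _ (mem_univ i₀), hm, qAnalog_mul, qAnalogPow_eq_expand, one_mul,
      map_mul]
    ring
  have hcoeff : ((∏ i, qAnalog (a i)) * qAnalogPow b r).coeff 0 ≠ 0 := by
    simp [mul_coeff_zero, coeff_zero_prod, coeff_zero_qAnalog (ha _), coeff_zero_qAnalogPow hb hr]
  refine HasSymmUnimodalCoeffs.isSymmPoly_and_isUnimodalPoly ?_ hcoeff
  rw [hfactor]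
  exact ((HasSymmUnimodalCoeffs.one.mul_qAnalog m).mul_qAnalog b).expand_mul_qAnalog hr
    |>.mul_prod_qAnalog _ _

theorem prod_qAnalogs_mul_qAnalogPow_symm_unimodal (k : ℕ) (hk : 1 ≤ k)
    (a : Fin k → ℕ) (b r : ℕ) (ha : ∀ i, 1 ≤ a i) (hb : 1 ≤ b) (hr : 1 ≤ r)
    (hdvd : ∃ i, r ∣ a i) :
    IsSymmPoly ((∏ i, qAnalog (a i)) * qAnalogPow b r) ∧
    IsUnimodalPoly ((∏ i, qAnalog (a i)) * qAnalogPow b r) :=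
  prod_qAnalogs_mul_qAnalogPow_symm_unimodal_general k a b r ha hb hdvd
end

section
/- Let a, b, c be positive integers with a ≤ b and a, b both odd. If 2c ≤ a + b, then A(k) ≥ B(k) for every integer k ≤ c + (a + b)/2 − 3, where A(k) := #{ℓ ∈ ℤ : 0 ≤ ℓ ≤ c − 1 and (k − a + 2)/2 ≤ ℓ ≤ (k + 1)/2} and B(k) := #{ℓ ∈ ℤ : 0 ≤ ℓ ≤ c − 1 and (k − a − b + 2)/2 ≤ ℓ ≤ (k − b + 1)/2}. -/
open Polynomial

/-- Cardinality of the set of integers `ℓ ∈ [0, c-1]` with `L ≤ 2ℓ ≤ U`. -/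
lemma card_half_interval (c L U : ℤ) :
    ((Finset.Icc (0:ℤ) (c-1)).filter (fun ℓ => L ≤ 2*ℓ ∧ 2*ℓ ≤ U)).card
      = (min (c-1) (U/2) + 1 - max 0 ((L+1)/2)).toNat := by
  rw [show (Finset.Icc (0:ℤ) (c-1)).filter (fun ℓ => L ≤ 2*ℓ ∧ 2*ℓ ≤ U)
      = Finset.Icc (max 0 ((L+1)/2)) (min (c-1) (U/2)) by
    ext ℓ
    simp only [Finset.mem_filter, Finset.mem_Icc, max_le_iff, le_min_iff]
    omega]
  exact Int.card_Icc _ _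

theorem Ak_ge_Bk (a b c : ℤ) (ha : 1 ≤ a) (hc : 1 ≤ c) (hab : a ≤ b)
    (haodd : Odd a) (hbodd : Odd b) (h2c : 2 * c ≤ a + b) :
    ∀ k : ℤ, (k : ℚ) ≤ (c : ℚ) + ((a : ℚ) + b) / 2 - 3 →
      ((Finset.Icc (0 : ℤ) (c - 1)).filter (fun ℓ : ℤ =>
          ((k : ℚ) - a + 2) / 2 ≤ (ℓ : ℚ) ∧ (ℓ : ℚ) ≤ ((k : ℚ) + 1) / 2)).card ≥
      ((Finset.Icc (0 : ℤ) (c - 1)).filter (fun ℓ : ℤ =>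
          ((k : ℚ) - a - b + 2) / 2 ≤ (ℓ : ℚ) ∧ (ℓ : ℚ) ≤ ((k : ℚ) - b + 1) / 2)).card := by
  intro k hk
  have h2 : (0:ℚ) < 2 := by norm_num
  have hA : (Finset.Icc (0 : ℤ) (c - 1)).filter (fun ℓ : ℤ =>
        ((k : ℚ) - a + 2) / 2 ≤ (ℓ : ℚ) ∧ (ℓ : ℚ) ≤ ((k : ℚ) + 1) / 2)
      = (Finset.Icc (0:ℤ) (c-1)).filter (fun ℓ => k - a + 2 ≤ 2*ℓ ∧ 2*ℓ ≤ k + 1) := by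
    apply Finset.filter_congr
    intro ℓ _
    rw [div_le_iff₀ h2, le_div_iff₀ h2]
    constructor
    · rintro ⟨h1, h2'⟩
      constructor <;> [exact_mod_cast (by push_cast; linarith : ((k - a + 2 : ℤ) : ℚ) ≤ ((2*ℓ : ℤ) : ℚ));
        exact_mod_cast (by push_cast; linarith : ((2*ℓ : ℤ) : ℚ) ≤ ((k + 1 : ℤ) : ℚ))]
    · rintro ⟨h1, h2'⟩
      have h1' : ((k - a + 2 : ℤ) : ℚ) ≤ ((2*ℓ : ℤ) : ℚ) := by exact_mod_cast h1
      have h2'' : ((2*ℓ : ℤ) : ℚ) ≤ ((k + 1 : ℤ) : ℚ) := by exact_mod_cast h2'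
      push_cast at h1' h2''
      constructor <;> linarith
  have hB : (Finset.Icc (0 : ℤ) (c - 1)).filter (fun ℓ : ℤ =>
        ((k : ℚ) - a - b + 2) / 2 ≤ (ℓ : ℚ) ∧ (ℓ : ℚ) ≤ ((k : ℚ) - b + 1) / 2)
      = (Finset.Icc (0:ℤ) (c-1)).filter (fun ℓ => k - a - b + 2 ≤ 2*ℓ ∧ 2*ℓ ≤ k - b + 1) := by
    apply Finset.filter_congr
    intro ℓ _
    rw [div_le_iff₀ h2, le_div_iff₀ h2]
    constructor
    · rintro ⟨h1, h2'⟩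
      constructor <;> [exact_mod_cast (by push_cast; linarith : ((k - a - b + 2 : ℤ) : ℚ) ≤ ((2*ℓ : ℤ) : ℚ));
        exact_mod_cast (by push_cast; linarith : ((2*ℓ : ℤ) : ℚ) ≤ ((k - b + 1 : ℤ) : ℚ))]
    · rintro ⟨h1, h2'⟩
      have h1' : ((k - a - b + 2 : ℤ) : ℚ) ≤ ((2*ℓ : ℤ) : ℚ) := by exact_mod_cast h1
      have h2'' : ((2*ℓ : ℤ) : ℚ) ≤ ((k - b + 1 : ℤ) : ℚ) := by exact_mod_cast h2'
      push_cast at h1' h2''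
      constructor <;> linarith
  rw [hA, hB, card_half_interval, card_half_interval]
  have hk2 : 2*k ≤ 2*c + a + b - 6 := by
    have : ((2*k : ℤ) : ℚ) ≤ ((2*c + a + b - 6 : ℤ) : ℚ) := by push_cast; linarith
    exact_mod_cast this
  have ha2 : a % 2 = 1 := Int.odd_iff.mp haodd
  have hb2 : b % 2 = 1 := Int.odd_iff.mp hbodd
  omega
end
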